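/- arXiv:1412.8161 — 2 statements merged into one kernel-verified Lean document; each statement's English description precedes it below -/
import Mathlib

section
/- For the one-group shrinkage prior with a > 0 and any given c > 2, there exists a function h : ℝ × (0,1) → [0,∞) (depending on c) such that |T_τ(x) − x| ≤ h(x,τ) for all x ∈ ℝ and all τ ∈ (0,1), and for every ρ > c, lim_{τ → 0} sup_{|x| > √(ρ log(1/τ^{2a}))} h(x,τ) = 0. -/
open MeasureTheory Filter Set

noncomputable section

namespace OneGroup

/-- A one-group (global-local) shrinkage prior: the local variance `λ²` has density
`π(λ²) = K (λ²)^{-a-1} L(λ²)` on `(0,∞)`, where `L` is a positive, measurable,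
non-constant slowly varying function, bounded above by `M`, and bounded below by
`c₀` on `[t₀, ∞)`. -/
structure Prior where
  K : ℝ
  a : ℝ
  L : ℝ → ℝ
  M : ℝ
  c₀ : ℝ
  t₀ : ℝ
  K_pos : 0 < K
  a_pos : 0 < a
  L_pos : ∀ t : ℝ, 0 < t → 0 < L t
  L_meas : Measurable L
  L_slow : ∀ c : ℝ, 0 < c → Tendsto (fun t => L (c * t) / L t) atTop (nhds 1)
  L_nonconst : ∃ s : ℝ, 0 < s ∧ ∃ t : ℝ, 0 < t ∧ L s ≠ L t
  M_pos : 0 < M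
  L_le : ∀ t : ℝ, 0 < t → L t ≤ M
  c₀_pos : 0 < c₀
  t₀_pos : 0 < t₀
  L_ge : ∀ t : ℝ, t₀ ≤ t → c₀ ≤ L t

/-- The (unnormalized) posterior weight, as a function of `t = λ²`, entering all
posterior expectations of functions of the shrinkage coefficient `κ = 1/(1+tτ²)`. -/
def wt (P : Prior) (x τ t : ℝ) : ℝ :=
  (1 + t * τ ^ 2) ^ (-(1:ℝ)/2) * t ^ (-P.a - 1) * P.L t *
    Real.exp (-x ^ 2 / (2 * (1 + t * τ ^ 2)))

/-- Posterior expectation `E(g(κ) | x, τ)` of a function `g` of the shrinkage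
coefficient `κ = 1/(1+λ²τ²)`. -/
def postExp (P : Prior) (g : ℝ → ℝ) (x τ : ℝ) : ℝ :=
  (∫ t in Ioi (0:ℝ), g (1 / (1 + t * τ ^ 2)) * wt P x τ t) /
    (∫ t in Ioi (0:ℝ), wt P x τ t)

/-- The posterior mean `T_τ(x) = x (1 - E(κ | x, τ))`. -/
def T (P : Prior) (τ x : ℝ) : ℝ := x * (1 - postExp P (fun κ => κ) x τ)

/-- The marginal prior density `p_τ(θ)` of `θ`. -/
def pdens (P : Prior) (τ θ : ℝ) : ℝ :=
  ∫ u in Ioi (0:ℝ),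
    (Real.sqrt (2 * Real.pi * u * τ ^ 2))⁻¹ * Real.exp (-θ ^ 2 / (2 * u * τ ^ 2)) *
      (P.K * u ^ (-P.a - 1) * P.L u)

/-- The unnormalized posterior density of `θ` given an observation `x ~ N(θ,1)`. -/
def postw (P : Prior) (τ x θ : ℝ) : ℝ := Real.exp (-(x - θ) ^ 2 / 2) * pdens P τ θ

/-- The `k`-th posterior moment of `θ` given `x`. -/
def postMoment (P : Prior) (τ x : ℝ) (k : ℕ) : ℝ :=
  (∫ θ : ℝ, θ ^ k * postw P τ x θ) / (∫ θ : ℝ, postw P τ x θ)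

/-- The posterior variance `Var(θ | x)`. -/
def postVar (P : Prior) (τ x : ℝ) : ℝ := postMoment P τ x 2 - (postMoment P τ x 1) ^ 2

/-- The standard normal density. -/
def gauss (z : ℝ) : ℝ := (Real.sqrt (2 * Real.pi))⁻¹ * Real.exp (-z ^ 2 / 2)

/-- Expectation of `f(X)` for `X ~ N(θ, 1)`. -/
def E1 (θ : ℝ) (f : ℝ → ℝ) : ℝ := ∫ x : ℝ, f x * gauss (x - θ)

/-- Expectation of `f(X)` for `X ~ N_n(θ, I_n)`. -/
def EN (n : ℕ) (θ : Fin n → ℝ) (f : (Fin n → ℝ) → ℝ) : ℝ :=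
  ∫ x : Fin n → ℝ, f x * ∏ i, gauss (x i - θ i)

/-- The posterior probability `Π(A | x)` of a set `A ⊆ ℝⁿ` given data `x`,
for the coordinatewise-independent posterior. -/
def postProb (P : Prior) (τ : ℝ) {n : ℕ} (x : Fin n → ℝ) (A : Set (Fin n → ℝ)) : ℝ :=
  (∫ θ in A, ∏ i, postw P τ (x i) (θ i)) /
    (∫ θ : Fin n → ℝ, ∏ i, postw P τ (x i) (θ i))

/-- The set `l₀[p]` of nearly black vectors in `ℝⁿ`. -/
def nearlyBlack (n p : ℕ) : Set (Fin n → ℝ) :=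
  {θ | (Finset.univ.filter fun i => θ i ≠ 0).card ≤ p}

end OneGroup

open OneGroup

/-!
Write `T_τ(x) - x = -x N/D` with `D = ∫ w(t) dt` and `N = ∫ κ(t) w(t) dt`.
On `t ∈ (x²/τ², 2x²/τ²]` the weight is `≳ |x|⁻¹ (x²/τ²)^{-a-1}` (there `L ≥ c₀`),
so `D ≳ |x|^{-2a-1} τ^{2a}`. Split `N` at `t = δ/τ²`: below,
`κw ≤ e^{-x²/(2(1+δ))} t^{-a-1} L(t)`; above, `e^{-v} ≤ k^k v^{-k}` with `k = a + 5/4`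
gives `≲ |x|^{-2a-5/2} τ^{2a}`. Hence
`|T_τ(x) - x| ≲ x^{2a+2} τ^{-2a} e^{-x²/(2(1+δ))} + |x|^{-1/2}`.
If `|x| > √(ρ log τ^{-2a})` then `τ^{-2a} < e^{x²/ρ}`, and with `2(1+δ) < c < ρ`
the first term is `≲ x^{2a+2} e^{-βx²}` for some `β > 0`.
When `t^{-a-1} L(t)` is not integrable, `D` is the junk value `0` and `T_τ(x) = x`.
-/

open Topology

lemma integrableOn_of_nonneg_of_le {f g : ℝ → ℝ} {s : Set ℝ} (hs : MeasurableSet s)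
    (hf : Measurable f) (hg : IntegrableOn g s) (hfg : ∀ t ∈ s, 0 ≤ f t ∧ f t ≤ g t) :
    IntegrableOn f s :=
  hg.mono' hf.aestronglyMeasurable <| ae_restrict_of_forall_mem hs fun t ht => by
    rw [Real.norm_eq_abs, abs_of_nonneg (hfg t ht).1]
    exact (hfg t ht).2

lemma Real.exp_neg_le_rpow_mul_rpow_neg {k v : ℝ} (hk : 0 < k) (hv : 0 < v) :
    Real.exp (-v) ≤ k ^ k * v ^ (-k) := by
  rw [Real.rpow_def_of_pos hk, Real.rpow_def_of_pos hv, ← Real.exp_add, Real.exp_le_exp]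
  have h := Real.log_le_sub_one_of_pos (div_pos hv hk)
  rw [Real.log_div hv.ne' hk.ne'] at h
  have hkv : k * (v / k) = v := by field_simp
  nlinarith [mul_le_mul_of_nonneg_left h hk.le]

lemma one_add_rpow_sub_le {a b δ v : ℝ} (ha : 0 ≤ a) (hb : 0 ≤ b) (hδ : 0 < δ)
    (hv : δ ≤ v) :
    (1 + v) ^ (a - b) ≤ (1 + δ⁻¹) ^ a * v ^ (a - b) := by
  have hv0 : 0 < v := hδ.trans_le hv
  have hle : 1 + v ≤ (1 + δ⁻¹) * v := by
    have : 1 ≤ δ⁻¹ * v := by rw [inv_mul_eq_div, one_le_div hδ]; exact hv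
    linarith
  calc (1 + v) ^ (a - b) = (1 + v) ^ a / (1 + v) ^ b := Real.rpow_sub (by positivity) _ _
    _ ≤ ((1 + δ⁻¹) * v) ^ a / v ^ b := by gcongr; linarith
    _ = (1 + δ⁻¹) ^ a * v ^ (a - b) := by
        rw [Real.mul_rpow (by positivity) hv0.le, Real.rpow_sub hv0]; ring

lemma lt_sq_of_sqrt_lt_abs {y x : ℝ} (h : √y < |x|) : y < x ^ 2 := by
  rw [← sq_abs]
  exact (Real.sqrt_lt' ((Real.sqrt_nonneg _).trans_lt h)).1 h

lemma rpow_neg_mul_exp_le_of_sqrt_lt {a b c ρ τ x : ℝ} (hc : 0 < c) (hcρ : c ≤ ρ)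
    (hτ : 0 < τ) (hx : √(ρ * Real.log (1 / τ ^ (2 * a))) < |x|) :
    (τ ^ 2) ^ (-a) * Real.exp (-x ^ 2 / b) ≤ Real.exp (-(b⁻¹ - c⁻¹) * x ^ 2) := by
  set L := Real.log (1 / τ ^ (2 * a))
  have hL : L ≤ x ^ 2 * c⁻¹ := by
    have hρL : L < x ^ 2 / ρ := (lt_div_iff₀' (hc.trans_le hcρ)).2 (lt_sq_of_sqrt_lt_abs hx)
    have : x ^ 2 / ρ ≤ x ^ 2 / c := div_le_div_of_nonneg_left (sq_nonneg x) hc hcρ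
    rw [← div_eq_mul_inv]
    linarith
  have hτa : (τ ^ 2) ^ (-a) = Real.exp L := by
    rw [Real.exp_log (by positivity), Real.rpow_neg (sq_nonneg τ), one_div,
      ← Real.rpow_natCast, ← Real.rpow_mul hτ.le]
    norm_num
  rw [hτa, ← Real.exp_add, Real.exp_le_exp, neg_div, div_eq_mul_inv]
  linarith

lemma eventually_le_mul_log_one_div_rpow {a ρ : ℝ} (ha : 0 < a) (hρ : 0 < ρ) (Z : ℝ) :
    ∀ᶠ τ in 𝓝[>] 0, Z ≤ ρ * Real.log (1 / τ ^ (2 * a)) := by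
  have h := Real.tendsto_log_nhdsGT_zero.atBot_mul_const_of_neg
    (show -(2 * a * ρ) < 0 by nlinarith)
  filter_upwards [h.eventually_ge_atTop Z, self_mem_nhdsWithin] with τ hτZ (hτ : 0 < τ)
  rw [one_div, Real.log_inv, Real.log_rpow hτ]
  linarith

lemma tendsto_rpow_mul_exp_add_rpow_neg (A B p : ℝ) {β q : ℝ} (hβ : 0 < β) (hq : 0 < q) :
    Tendsto (fun z => A * z ^ p * Real.exp (-β * z) + B * z ^ (-q)) atTop (𝓝 0) := by
  have h := ((tendsto_rpow_mul_exp_neg_mul_atTop_nhds_zero p β hβ).const_mul A).add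
    ((tendsto_rpow_neg_atTop hq).const_mul B)
  simpa [mul_assoc] using h

namespace OneGroup

def Prior.kernel (P : Prior) (t : ℝ) : ℝ := t ^ (-P.a - 1) * P.L t

def kappaWt (P : Prior) (x τ t : ℝ) : ℝ := 1 / (1 + t * τ ^ 2) * wt P x τ t

variable (P : Prior) {x τ t : ℝ}

lemma Prior.measurable_kernel : Measurable P.kernel :=
  (measurable_id.pow_const _).mul P.L_meas

lemma Prior.kernel_nonneg (ht : 0 < t) : 0 ≤ P.kernel t :=
  mul_nonneg (Real.rpow_nonneg ht.le _) (P.L_pos t ht).le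

lemma Prior.kernel_le (ht : 0 < t) : P.kernel t ≤ P.M * t ^ (-P.a - 1) := by
  rw [Prior.kernel, mul_comm P.M]
  exact mul_le_mul_of_nonneg_left (P.L_le t ht) (Real.rpow_nonneg ht.le _)

lemma Prior.integrableOn_kernel_Ioi_one : IntegrableOn P.kernel (Ioi 1) :=
  integrableOn_of_nonneg_of_le measurableSet_Ioi P.measurable_kernel
    ((integrableOn_Ioi_rpow_of_lt (by linarith [P.a_pos]) one_pos).const_mul P.M)
    fun _ ht => ⟨P.kernel_nonneg (one_pos.trans ht), P.kernel_le (one_pos.trans ht)⟩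

lemma measurable_wt (x τ : ℝ) : Measurable (wt P x τ) := by
  have := P.L_meas
  unfold wt
  fun_prop

lemma wt_pos (x τ : ℝ) (ht : 0 < t) : 0 < wt P x τ t := by
  have := P.L_pos t ht
  unfold wt
  positivity

lemma wt_le_kernel (ht : 0 < t) : wt P x τ t ≤ P.kernel t := by
  have hq : 1 ≤ 1 + t * τ ^ 2 := le_add_of_nonneg_right (by positivity)
  have hpow : (1 + t * τ ^ 2) ^ (-(1:ℝ)/2) ≤ 1 :=
    Real.rpow_le_one_of_one_le_of_nonpos hq (by norm_num)
  have hexp : Real.exp (-x ^ 2 / (2 * (1 + t * τ ^ 2))) ≤ 1 :=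
    Real.exp_le_one_iff.2 (div_nonpos_of_nonpos_of_nonneg (neg_nonpos.2 (sq_nonneg x))
      (by positivity))
  calc wt P x τ t = (1 + t * τ ^ 2) ^ (-(1:ℝ)/2) * Real.exp (-x ^ 2 / (2 * (1 + t * τ ^ 2)))
        * P.kernel t := by unfold wt Prior.kernel; ring
    _ ≤ 1 * 1 * P.kernel t := by gcongr; exact P.kernel_nonneg ht
    _ = P.kernel t := by ring

lemma mul_kernel_le_wt (ht : 0 < t) (ht1 : t ≤ 1) :
    (1 + τ ^ 2) ^ (-(1:ℝ)/2) * Real.exp (-x ^ 2 / 2) * P.kernel t ≤ wt P x τ t := by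
  have hq : 1 ≤ 1 + t * τ ^ 2 := le_add_of_nonneg_right (by positivity)
  have hqτ : 1 + t * τ ^ 2 ≤ 1 + τ ^ 2 := by nlinarith [sq_nonneg τ]
  calc (1 + τ ^ 2) ^ (-(1:ℝ)/2) * Real.exp (-x ^ 2 / 2) * P.kernel t
      ≤ (1 + t * τ ^ 2) ^ (-(1:ℝ)/2) * Real.exp (-x ^ 2 / (2 * (1 + t * τ ^ 2)))
        * P.kernel t := by
        gcongr ?_ * Real.exp ?_ * _
        · exact P.kernel_nonneg ht
        · exact Real.rpow_le_rpow_of_nonpos (by positivity) hqτ (by norm_num)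
        · rw [neg_div, neg_div, neg_le_neg_iff]
          exact div_le_div_of_nonneg_left (sq_nonneg x) two_pos (by linarith)
    _ = wt P x τ t := by unfold wt Prior.kernel; ring

lemma integrableOn_wt_iff (x τ : ℝ) :
    IntegrableOn (wt P x τ) (Ioi 0) ↔ IntegrableOn P.kernel (Ioi 0) := by
  constructor
  · intro h
    rw [← Ioc_union_Ioi_eq_Ioi zero_le_one]
    refine IntegrableOn.union ?_ P.integrableOn_kernel_Ioi_one
    set C := (1 + τ ^ 2) ^ (-(1:ℝ)/2) * Real.exp (-x ^ 2 / 2)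
    have hC : 0 < C := by positivity
    have hCk : IntegrableOn (fun t => C * P.kernel t) (Ioc 0 1) :=
      integrableOn_of_nonneg_of_le measurableSet_Ioc (measurable_const.mul P.measurable_kernel)
        (h.mono_set Ioc_subset_Ioi_self)
        fun t ht => ⟨mul_nonneg hC.le (P.kernel_nonneg ht.1), mul_kernel_le_wt P ht.1 ht.2⟩
    have hk := hCk.const_mul C⁻¹
    simp only [← mul_assoc, inv_mul_cancel₀ hC.ne', one_mul] at hk
    exact hk
  · intro h
    exact integrableOn_of_nonneg_of_le measurableSet_Ioi (measurable_wt P x τ) h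
      fun t ht => ⟨(wt_pos P x τ ht).le, wt_le_kernel P ht⟩

lemma kappaWt_nonneg (x τ : ℝ) (ht : 0 < t) : 0 ≤ kappaWt P x τ t := by
  have := wt_pos P x τ ht
  unfold kappaWt
  positivity

lemma integrableOn_kappaWt (hI : IntegrableOn P.kernel (Ioi 0)) (x τ : ℝ) :
    IntegrableOn (kappaWt P x τ) (Ioi 0) := by
  refine integrableOn_of_nonneg_of_le measurableSet_Ioi
    ((by fun_prop : Measurable fun t : ℝ => 1 / (1 + t * τ ^ 2)).mul (measurable_wt P x τ))
    ((integrableOn_wt_iff P x τ).2 hI)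
    fun t ht => ⟨kappaWt_nonneg P x τ ht, ?_⟩
  have hq : 1 ≤ 1 + t * τ ^ 2 := le_add_of_nonneg_right (by have : 0 < t := ht; positivity)
  exact mul_le_of_le_one_left (wt_pos P x τ ht).le (div_le_one_of_le₀ hq (by linarith))

lemma wt_ge_of_mem_Ioc {u : ℝ} (hu : u * τ ^ 2 = x ^ 2) (hx : 1 ≤ x ^ 2) (hu₀ : P.t₀ ≤ u)
    (ht : t ∈ Ioc u (2 * u)) :
    P.c₀ * Real.exp (-(1/2)) * (3 * x ^ 2) ^ (-(1/2 : ℝ)) * (2 * u) ^ (-P.a - 1) ≤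
      wt P x τ t := by
  have hu0 : 0 < u := P.t₀_pos.trans_le hu₀
  have ht0 : 0 < t := hu0.trans ht.1
  have hv₁ : x ^ 2 ≤ t * τ ^ 2 := hu ▸ mul_le_mul_of_nonneg_right ht.1.le (sq_nonneg τ)
  have hv₂ : t * τ ^ 2 ≤ 2 * x ^ 2 := by
    nlinarith [mul_le_mul_of_nonneg_right ht.2 (sq_nonneg τ)]
  have := P.L_pos t ht0
  have hL : P.c₀ ≤ P.L t := P.L_ge t (hu₀.trans ht.1.le)
  have hexp : -(1/2) ≤ -x ^ 2 / (2 * (1 + t * τ ^ 2)) := by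
    rw [neg_div, neg_le_neg_iff, div_le_iff₀ (by positivity)]
    linarith
  have hq : (3 * x ^ 2) ^ (-(1/2 : ℝ)) ≤ (1 + t * τ ^ 2) ^ (-(1/2 : ℝ)) :=
    Real.rpow_le_rpow_of_nonpos (by positivity) (by linarith) (by norm_num)
  have hpow : (2 * u) ^ (-P.a - 1) ≤ t ^ (-P.a - 1) :=
    Real.rpow_le_rpow_of_nonpos ht0 ht.2 (by linarith [P.a_pos])
  calc P.c₀ * Real.exp (-(1/2)) * (3 * x ^ 2) ^ (-(1/2 : ℝ)) * (2 * u) ^ (-P.a - 1)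
      ≤ P.L t * Real.exp (-x ^ 2 / (2 * (1 + t * τ ^ 2))) * (1 + t * τ ^ 2) ^ (-(1/2 : ℝ))
        * t ^ (-P.a - 1) := by gcongr
    _ = wt P x τ t := by unfold wt; norm_num; ring

lemma exists_le_integral_wt (hI : IntegrableOn P.kernel (Ioi 0)) :
    ∃ C > 0, ∀ x τ : ℝ, 1 ≤ x ^ 2 → P.t₀ ≤ x ^ 2 / τ ^ 2 →
      C * (x ^ 2) ^ (-(P.a + 1/2)) * (τ ^ 2) ^ P.a ≤ ∫ t in Ioi 0, wt P x τ t := by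
  refine ⟨P.c₀ * Real.exp (-(1/2)) * 3 ^ (-(1/2 : ℝ)) * 2 ^ (-P.a - 1),
    by have := P.c₀_pos; positivity, fun x τ hx hu₀ => ?_⟩
  set u := x ^ 2 / τ ^ 2
  have hu0 : 0 < u := P.t₀_pos.trans_le hu₀
  have hτ : τ ^ 2 ≠ 0 := by rintro hτ; simp [u, hτ] at hu0
  have hx0 : 0 < x ^ 2 := by linarith
  have hu : u * τ ^ 2 = x ^ 2 := div_mul_cancel₀ _ hτ
  have hwt := (integrableOn_wt_iff P x τ).2 hI
  have hmass : P.c₀ * Real.exp (-(1/2)) * 3 ^ (-(1/2 : ℝ)) * 2 ^ (-P.a - 1)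
        * (x ^ 2) ^ (-(P.a + 1/2)) * (τ ^ 2) ^ P.a
      = u * (P.c₀ * Real.exp (-(1/2)) * (3 * x ^ 2) ^ (-(1/2 : ℝ)) * (2 * u) ^ (-P.a - 1)) := by
    rw [Real.mul_rpow (by norm_num) hx0.le, Real.mul_rpow (by norm_num) hu0.le,
      Real.rpow_sub_one hu0.ne', Real.div_rpow hx0.le (by positivity), Real.rpow_neg hx0.le,
      Real.rpow_neg hx0.le, Real.rpow_neg hx0.le, Real.rpow_add hx0]
    field_simp
    rw [mul_assoc, ← Real.rpow_add (by positivity), add_neg_cancel, Real.rpow_zero, mul_one]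
  calc _ = ∫ _ in Ioc u (2 * u),
        P.c₀ * Real.exp (-(1/2)) * (3 * x ^ 2) ^ (-(1/2 : ℝ)) * (2 * u) ^ (-P.a - 1) := by
        rw [setIntegral_const, Real.volume_real_Ioc_of_le (by linarith), hmass, smul_eq_mul]
        ring
    _ ≤ ∫ t in Ioc u (2 * u), wt P x τ t :=
        setIntegral_mono_on (integrableOn_const (by simp)) (hwt.mono_set fun t ht => hu0.trans ht.1)
          measurableSet_Ioc fun t ht => wt_ge_of_mem_Ioc P hu hx hu₀ ht
    _ ≤ ∫ t in Ioi 0, wt P x τ t :=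
        setIntegral_mono_set hwt (ae_restrict_of_forall_mem measurableSet_Ioi
          fun t ht => (wt_pos P x τ ht).le)
          (show Ioc u (2 * u) ⊆ Ioi 0 from fun t ht => hu0.trans ht.1).eventuallyLE

lemma kappaWt_le_of_mul_le {δ : ℝ} (ht : 0 < t) (hδ : t * τ ^ 2 ≤ δ) :
    kappaWt P x τ t ≤ Real.exp (-x ^ 2 / (2 * (1 + δ))) * P.kernel t := by
  have hq : 1 ≤ 1 + t * τ ^ 2 := le_add_of_nonneg_right (by positivity)
  have hinv : 1 / (1 + t * τ ^ 2) ≤ 1 := div_le_one_of_le₀ hq (by linarith)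
  have hpow : (1 + t * τ ^ 2) ^ (-(1:ℝ)/2) ≤ 1 :=
    Real.rpow_le_one_of_one_le_of_nonpos hq (by norm_num)
  have hexp : -x ^ 2 / (2 * (1 + t * τ ^ 2)) ≤ -x ^ 2 / (2 * (1 + δ)) := by
    rw [neg_div, neg_div, neg_le_neg_iff]
    exact div_le_div_of_nonneg_left (sq_nonneg x) (by linarith) (by linarith)
  have := P.kernel_nonneg ht
  calc kappaWt P x τ t = 1 / (1 + t * τ ^ 2) * (1 + t * τ ^ 2) ^ (-(1:ℝ)/2)
        * Real.exp (-x ^ 2 / (2 * (1 + t * τ ^ 2))) * P.kernel t := by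
        unfold kappaWt wt Prior.kernel; ring
    _ ≤ 1 * 1 * Real.exp (-x ^ 2 / (2 * (1 + δ))) * P.kernel t := by gcongr
    _ = Real.exp (-x ^ 2 / (2 * (1 + δ))) * P.kernel t := by ring

lemma setIntegral_kappaWt_Ioc_le (hI : IntegrableOn P.kernel (Ioi 0)) (hτ : 0 < τ) (δ : ℝ) :
    ∫ t in Ioc 0 (δ / τ ^ 2), kappaWt P x τ t ≤
      (∫ t in Ioi 0, P.kernel t) * Real.exp (-x ^ 2 / (2 * (1 + δ))) := by
  set E := Real.exp (-x ^ 2 / (2 * (1 + δ)))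
  calc ∫ t in Ioc 0 (δ / τ ^ 2), kappaWt P x τ t
      ≤ ∫ t in Ioc 0 (δ / τ ^ 2), E * P.kernel t :=
        setIntegral_mono_on ((integrableOn_kappaWt P hI x τ).mono_set Ioc_subset_Ioi_self)
          ((hI.mono_set Ioc_subset_Ioi_self).const_mul E) measurableSet_Ioc fun t ht =>
            kappaWt_le_of_mul_le P ht.1 ((le_div_iff₀ (by positivity)).1 ht.2)
    _ = E * ∫ t in Ioc 0 (δ / τ ^ 2), P.kernel t := integral_const_mul E _
    _ ≤ E * ∫ t in Ioi 0, P.kernel t :=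
        mul_le_mul_of_nonneg_left (setIntegral_mono_set hI
          (ae_restrict_of_forall_mem measurableSet_Ioi
          fun t ht => P.kernel_nonneg ht) Ioc_subset_Ioi_self.eventuallyLE) (Real.exp_pos _).le
    _ = (∫ t in Ioi 0, P.kernel t) * E := mul_comm _ _

/- The exponent `a + 5/4` is chosen in `(a + 1, a + 3/2)`: below `a + 3/2` the bound is integrable
in `t`, above `a + 1` it decays faster than `|x|⁻¹ D(x, τ)`. -/
lemma kappaWt_le_of_le_mul {δ : ℝ} (hδ : 0 < δ) (ht : 0 < t) (hx : x ≠ 0)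
    (hδt : δ ≤ t * τ ^ 2) :
    kappaWt P x τ t ≤ P.M * (P.a + 5/4) ^ (P.a + 5/4) * 2 ^ (P.a + 5/4) * (1 + δ⁻¹) ^ P.a
      * (x ^ 2) ^ (-(P.a + 5/4)) * (τ ^ 2) ^ (P.a - 1/4) * t ^ (-(5/4 : ℝ)) := by
  have hk : 0 < P.a + 5/4 := by linarith [P.a_pos]
  set k := P.a + 5/4 with hk_def
  set q := 1 + t * τ ^ 2
  have hq : 0 < q := by positivity
  have hexp : Real.exp (-(x ^ 2 / (2 * q))) ≤ k ^ k * (x ^ 2 / (2 * q)) ^ (-k) :=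
    Real.exp_neg_le_rpow_mul_rpow_neg hk (by positivity)
  have hsplit : (x ^ 2 / (2 * q)) ^ (-k) = (x ^ 2) ^ (-k) * 2 ^ k * q ^ k := by
    rw [Real.div_rpow (sq_nonneg x) (by positivity), Real.rpow_neg (by positivity : 0 ≤ 2 * q),
      div_inv_eq_mul, Real.mul_rpow zero_le_two hq.le, mul_assoc]
  have hqpow : 1 / q * q ^ (-(1:ℝ)/2) * q ^ k = q ^ (P.a - 1/4) := by
    rw [one_div, ← Real.rpow_neg_one, ← Real.rpow_add hq, ← Real.rpow_add hq, hk_def]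
    ring_nf
  have htpow : t ^ (P.a - 1/4) * t ^ (-P.a - 1) = t ^ (-(5/4 : ℝ)) := by
    rw [← Real.rpow_add ht]
    ring_nf
  calc kappaWt P x τ t = (1 / q * q ^ (-(1:ℝ)/2) * t ^ (-P.a - 1))
        * (P.L t * Real.exp (-(x ^ 2 / (2 * q)))) := by
        simp only [kappaWt, wt, q, neg_div]; ring_nf
    _ ≤ (1 / q * q ^ (-(1:ℝ)/2) * t ^ (-P.a - 1))
        * (P.M * (k ^ k * (x ^ 2 / (2 * q)) ^ (-k))) := by
        have := P.L_le t ht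
        have := P.M_pos
        gcongr
    _ = P.M * k ^ k * 2 ^ k * (x ^ 2) ^ (-k) * (1 / q * q ^ (-(1:ℝ)/2) * q ^ k)
        * t ^ (-P.a - 1) := by rw [hsplit]; ring
    _ = P.M * k ^ k * 2 ^ k * (x ^ 2) ^ (-k) * q ^ (P.a - 1/4) * t ^ (-P.a - 1) := by rw [hqpow]
    _ ≤ P.M * k ^ k * 2 ^ k * (x ^ 2) ^ (-k) * ((1 + δ⁻¹) ^ P.a * (t * τ ^ 2) ^ (P.a - 1/4))
        * t ^ (-P.a - 1) := by
        have := P.M_pos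
        gcongr
        exact one_add_rpow_sub_le P.a_pos.le (by norm_num) hδ hδt
    _ = P.M * k ^ k * 2 ^ k * (1 + δ⁻¹) ^ P.a * (x ^ 2) ^ (-k) * (τ ^ 2) ^ (P.a - 1/4)
        * (t ^ (P.a - 1/4) * t ^ (-P.a - 1)) := by
        rw [Real.mul_rpow ht.le (sq_nonneg τ)]; ring
    _ = _ := by rw [htpow]

lemma exists_setIntegral_kappaWt_Ioi_le {δ : ℝ} (hδ : 0 < δ)
    (hI : IntegrableOn P.kernel (Ioi 0)) :
    ∃ C, ∀ x τ : ℝ, 0 < τ → x ≠ 0 →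
      ∫ t in Ioi (δ / τ ^ 2), kappaWt P x τ t
        ≤ C * (x ^ 2) ^ (-(P.a + 5/4)) * (τ ^ 2) ^ P.a := by
  set C₀ := P.M * (P.a + 5/4) ^ (P.a + 5/4) * 2 ^ (P.a + 5/4) * (1 + δ⁻¹) ^ P.a
  refine ⟨4 * δ ^ (-(1/4 : ℝ)) * C₀, fun x τ hτ hx => ?_⟩
  have hτ2 : 0 < τ ^ 2 := by positivity
  have hs : 0 < δ / τ ^ 2 := by positivity
  have hτpow : (τ ^ 2) ^ (P.a - 1/4) = (τ ^ 2) ^ P.a * (τ ^ 2) ^ (-(1/4 : ℝ)) := by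
    rw [← Real.rpow_add hτ2]; ring_nf
  calc ∫ t in Ioi (δ / τ ^ 2), kappaWt P x τ t
      ≤ ∫ t in Ioi (δ / τ ^ 2),
          C₀ * (x ^ 2) ^ (-(P.a + 5/4)) * (τ ^ 2) ^ (P.a - 1/4) * t ^ (-(5/4 : ℝ)) :=
        setIntegral_mono_on ((integrableOn_kappaWt P hI x τ).mono_set fun t ht => hs.trans ht)
          ((integrableOn_Ioi_rpow_of_lt (by norm_num) hs).const_mul _) measurableSet_Ioi
          fun t ht => kappaWt_le_of_le_mul P hδ (hs.trans ht) hx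
            ((div_le_iff₀ hτ2).1 (le_of_lt ht))
    _ = C₀ * (x ^ 2) ^ (-(P.a + 5/4)) * (τ ^ 2) ^ (P.a - 1/4)
        * (4 * (δ / τ ^ 2) ^ (-(1/4 : ℝ))) := by
        rw [integral_const_mul, integral_Ioi_rpow_of_lt (by norm_num) hs,
          show (-(5/4 : ℝ)) + 1 = -(1/4) by norm_num]
        ring
    _ = 4 * δ ^ (-(1/4 : ℝ)) * C₀ * (x ^ 2) ^ (-(P.a + 5/4)) * (τ ^ 2) ^ P.a := by
        rw [Real.div_rpow hδ.le hτ2.le, hτpow]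
        field_simp

lemma exists_integral_kappaWt_le {δ : ℝ} (hδ : 0 < δ) (hI : IntegrableOn P.kernel (Ioi 0)) :
    ∃ C, ∀ x τ : ℝ, 0 < τ → x ≠ 0 →
      ∫ t in Ioi 0, kappaWt P x τ t
        ≤ (∫ t in Ioi 0, P.kernel t) * Real.exp (-x ^ 2 / (2 * (1 + δ)))
          + C * (x ^ 2) ^ (-(P.a + 5/4)) * (τ ^ 2) ^ P.a := by
  obtain ⟨C, hC⟩ := exists_setIntegral_kappaWt_Ioi_le P hδ hI
  refine ⟨C, fun x τ hτ hx => ?_⟩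
  have hs : 0 < δ / τ ^ 2 := by positivity
  have hκ := integrableOn_kappaWt P hI x τ
  conv_lhs => rw [← Ioc_union_Ioi_eq_Ioi hs.le]
  rw [setIntegral_union (Ioc_disjoint_Ioi le_rfl) measurableSet_Ioi
    (hκ.mono_set Ioc_subset_Ioi_self) (hκ.mono_set fun t ht => hs.trans ht)]
  exact add_le_add (setIntegral_kappaWt_Ioc_le P hI hτ δ) (hC x τ hτ hx)

lemma T_eq_self_of_not_integrableOn (h : ¬ IntegrableOn (wt P x τ) (Ioi 0)) : T P τ x = x := by
  simp [T, postExp, integral_undef h]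

lemma abs_T_sub_self (x τ : ℝ) :
    |T P τ x - x| = |x| * |(∫ t in Ioi 0, kappaWt P x τ t) / ∫ t in Ioi 0, wt P x τ t| := by
  rw [← abs_mul, ← abs_neg]
  congr 1
  simp only [T, postExp, kappaWt]
  ring

lemma exists_abs_T_sub_self_le {δ : ℝ} (hδ : 0 < δ) :
    ∃ A ≥ 0, ∃ B, ∀ x τ : ℝ, 0 < τ → 1 ≤ x ^ 2 → P.t₀ ≤ x ^ 2 / τ ^ 2 →
      |T P τ x - x| ≤ A * (x ^ 2) ^ (P.a + 1) * ((τ ^ 2) ^ (-P.a)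
        * Real.exp (-x ^ 2 / (2 * (1 + δ)))) + B * (x ^ 2) ^ (-(1/4 : ℝ)) := by
  by_cases hI : IntegrableOn P.kernel (Ioi 0)
  swap
  · refine ⟨0, le_rfl, 0, fun x τ _ _ _ => ?_⟩
    rw [T_eq_self_of_not_integrableOn P (mt (integrableOn_wt_iff P _ _).1 hI)]
    simp
  obtain ⟨C_D, hC_D, hD⟩ := exists_le_integral_wt P hI
  obtain ⟨C_N, hN⟩ := exists_integral_kappaWt_le P hδ hI
  set I := ∫ t in Ioi 0, P.kernel t
  have hI0 : 0 ≤ I := setIntegral_nonneg measurableSet_Ioi fun t ht => P.kernel_nonneg ht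
  refine ⟨I / C_D, div_nonneg hI0 hC_D.le, C_N / C_D, fun x τ hτ hx ht₀ => ?_⟩
  set z := x ^ 2
  set E := Real.exp (-z / (2 * (1 + δ)))
  have hz : 0 < z := by linarith
  have hNle := hN x τ hτ (by rintro rfl; simp [z] at hz)
  have hN0 : 0 ≤ ∫ t in Ioi 0, kappaWt P x τ t :=
    setIntegral_nonneg measurableSet_Ioi fun t ht => kappaWt_nonneg P x τ ht
  have hDl : 0 < C_D * z ^ (-(P.a + 1/2)) * (τ ^ 2) ^ P.a := by positivity
  have hDle := hD x τ hx ht₀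
  have habs : |x| = z ^ (1/2 : ℝ) := by rw [← Real.sqrt_eq_rpow, Real.sqrt_sq_eq_abs]
  have e₁ : |x| * z ^ (P.a + 1/2) = z ^ (P.a + 1) := by
    rw [habs, ← Real.rpow_add hz]; ring_nf
  have e₂ : |x| * z ^ (-(P.a + 5/4)) * z ^ (P.a + 1/2) = z ^ (-(1/4 : ℝ)) := by
    rw [habs, ← Real.rpow_add hz, ← Real.rpow_add hz]; ring_nf
  calc |T P τ x - x|
      = |x| * ((∫ t in Ioi 0, kappaWt P x τ t) / ∫ t in Ioi 0, wt P x τ t) := by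
        rw [abs_T_sub_self, abs_of_nonneg (div_nonneg hN0 (hDl.le.trans hDle))]
    _ ≤ |x| * ((I * E + C_N * z ^ (-(P.a + 5/4)) * (τ ^ 2) ^ P.a)
          / (C_D * z ^ (-(P.a + 1/2)) * (τ ^ 2) ^ P.a)) := by
        gcongr
        exact hN0.trans hNle
    _ = _ := by
        rw [← e₁, ← e₂, Real.rpow_neg hz.le (P.a + 1/2), Real.rpow_neg (sq_nonneg τ)]
        field_simp

end OneGroup

/-- Lemma A.3: there is a dominating function `h(x, τ)` for
`|T_τ(x) - x|` such that for every `ρ > c`,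
`sup_{|x| > √(ρ log(1/τ^{2a}))} h(x, τ) → 0` as `τ → 0`. -/
theorem bayes_estimate_bias_bound (P : Prior) (c : ℝ) (hc : 2 < c) :
    ∃ h : ℝ → ℝ → ℝ,
      (∀ x : ℝ, ∀ τ ∈ Ioo (0:ℝ) 1, 0 ≤ h x τ ∧ |T P τ x - x| ≤ h x τ) ∧
      ∀ ρ > c, ∀ ε > (0:ℝ), ∃ τ₁ > (0:ℝ), ∀ τ ∈ Ioo (0:ℝ) 1, τ < τ₁ →
        ∀ x : ℝ, Real.sqrt (ρ * Real.log (1 / τ ^ (2 * P.a))) < |x| → h x τ < ε := by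
  refine ⟨fun x τ => |T P τ x - x|, fun x τ _ => ⟨abs_nonneg _, le_rfl⟩,
    fun ρ hρ ε hε => ?_⟩
  set δ := (c - 2) / 4 with hδ_def
  have hδ : 0 < δ := by positivity
  set β := (2 * (1 + δ))⁻¹ - c⁻¹
  have hβ : 0 < β := sub_pos.2 (inv_strictAnti₀ (by positivity) (by linarith [hδ_def]))
  obtain ⟨A, hA, B, hbias⟩ := exists_abs_T_sub_self_le P hδ
  obtain ⟨Z, hZ⟩ := eventually_atTop.1
    ((tendsto_rpow_mul_exp_add_rpow_neg A B (P.a + 1) hβ (by norm_num : (0:ℝ) < 1/4)).eventually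
      (gt_mem_nhds hε))
  obtain ⟨τ₁, hτ₁, hlog⟩ := mem_nhdsGT_iff_exists_Ioo_subset.1
    (eventually_le_mul_log_one_div_rpow (ρ := ρ) P.a_pos (by linarith) (max (max 1 P.t₀) Z))
  refine ⟨τ₁, hτ₁, fun τ ⟨hτ0, hτ1⟩ hττ₁ x hx => ?_⟩
  have hxZ : max (max 1 P.t₀) Z < x ^ 2 :=
    (hlog ⟨hτ0, hττ₁⟩).trans_lt (lt_sq_of_sqrt_lt_abs hx)
  simp only [max_lt_iff] at hxZ
  have ht₀ : P.t₀ ≤ x ^ 2 / τ ^ 2 :=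
    hxZ.1.2.le.trans (le_div_self (sq_nonneg x) (by positivity) (pow_le_one₀ hτ0.le hτ1.le))
  calc |T P τ x - x|
      ≤ A * (x ^ 2) ^ (P.a + 1) * ((τ ^ 2) ^ (-P.a) * Real.exp (-x ^ 2 / (2 * (1 + δ))))
        + B * (x ^ 2) ^ (-(1/4 : ℝ)) := hbias x τ hτ0 hxZ.1.1.le ht₀
    _ ≤ A * (x ^ 2) ^ (P.a + 1) * Real.exp (-β * x ^ 2) + B * (x ^ 2) ^ (-(1/4 : ℝ)) := by
        gcongr
        exact rpow_neg_mul_exp_le_of_sqrt_lt (by linarith) hρ.le hτ0 hx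
    _ < ε := hZ _ hxZ.2.le
end
end

section
/- Let L : (0,∞) → (0,∞) be measurable, non-decreasing, slowly varying, bounded above by M ∈ (0,∞), with ∫₀^∞ t^{-3/2} L(t) dt = 1/K for some K > 0. For y > 0, τ > 0 and k > 0 set I_k = ∫₀^∞ (tτ²)^{k−1/2} (1+tτ²)^{-k} t^{-3/2} L(t) e^{tτ²y/(1+tτ²)} dt. Then for every y > 0 and every 0 < τ < 1/√2, I_{5/2} ≥ L(1) τ [ (τ/y)(e^{y/2} − e^{τ²y}) + (1/(√2 y))(e^{y} − e^{y/2}) ]. -/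
open MeasureTheory Filter Set

noncomputable section

open OneGroup

/-!
With `κ = 1/(1+tτ²)`, the integrand of `I_{5/2}` equals `(τ/y) L(t) √(1-κ) · d/dt e^{y(1-κ)}`.
On `t > 1/(1-τ²) ≥ 1` we have `1 - κ ≥ τ²` and `L(t) ≥ L(1)`, and on `t > 1/τ²` even
`1 - κ ≥ 1/2`. As `1 - κ` equals `τ²`, `1/2` and `1` at `1/(1-τ²)`, `1/τ²` and `∞`, integrating the
derivative over these two ranges gives the two terms of the bound. Integrability comes from the
domination of the integrand by `(τM/y) · d/dt e^{y(1-κ)}`.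
-/

open Topology

theorem le_setIntegral_mul_deriv {F F' w : ℝ → ℝ} {l s p q c₁ c₂ W : ℝ}
    (hF : ∀ t ∈ Ici s, HasDerivAt F (F' t) t) (hF' : ∀ t ∈ Ioi s, 0 ≤ F' t)
    (hFl : Tendsto F atTop (𝓝 l)) (hw : AEStronglyMeasurable w (volume.restrict (Ioi s)))
    (hw0 : ∀ t ∈ Ioi s, 0 ≤ w t) (hwW : ∀ t ∈ Ioi s, w t ≤ W)
    (hsp : s ≤ p) (hpq : p ≤ q) (h₁ : ∀ t ∈ Ioc p q, c₁ ≤ w t) (h₂ : ∀ t ∈ Ioi q, c₂ ≤ w t) :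
    c₁ * (F q - F p) + c₂ * (l - F q) ≤ ∫ t in Ioi s, w t * F' t := by
  have hpIoi : Ioi p ⊆ Ioi s := Ioi_subset_Ioi hsp
  have hF'int : IntegrableOn F' (Ioi s) := integrableOn_Ioi_deriv_of_nonneg' hF hF' hFl
  have hint : IntegrableOn (fun t => w t * F' t) (Ioi s) := by
    refine hF'int.bdd_mul hw (c := W) ?_
    filter_upwards [ae_restrict_mem measurableSet_Ioi] with t ht
    rw [Real.norm_of_nonneg (hw0 t ht)]
    exact hwW t ht
  have hFpq : ∫ t in Ioc p q, F' t = F q - F p := by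
    rw [← intervalIntegral.integral_of_le hpq]
    refine intervalIntegral.integral_eq_sub_of_hasDerivAt (fun t ht => hF t ?_) ?_
    · rw [uIcc_of_le hpq] at ht
      exact hsp.trans ht.1
    · exact (intervalIntegrable_iff_integrableOn_Ioc_of_le hpq).2
        (hF'int.mono_set (Ioc_subset_Ioi_self.trans hpIoi))
  have hFq : ∫ t in Ioi q, F' t = l - F q :=
    integral_Ioi_of_hasDerivAt_of_tendsto' (fun t ht => hF t ((hsp.trans hpq).trans ht))
      (hF'int.mono_set (Ioi_subset_Ioi (hsp.trans hpq))) hFl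
  have hmono {c : ℝ} {A : Set ℝ} (hA : A ⊆ Ioi s) (hAm : MeasurableSet A)
      (hc : ∀ t ∈ A, c ≤ w t) : ∫ t in A, c * F' t ≤ ∫ t in A, w t * F' t :=
    setIntegral_mono_on ((hF'int.mono_set hA).const_mul c) (hint.mono_set hA) hAm
      fun t ht => mul_le_mul_of_nonneg_right (hc t ht) (hF' t (hA ht))
  calc c₁ * (F q - F p) + c₂ * (l - F q)
      = (∫ t in Ioc p q, c₁ * F' t) + ∫ t in Ioi q, c₂ * F' t := by
        rw [integral_const_mul, integral_const_mul, hFpq, hFq]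
    _ ≤ (∫ t in Ioc p q, w t * F' t) + ∫ t in Ioi q, w t * F' t :=
        add_le_add (hmono (Ioc_subset_Ioi_self.trans hpIoi) measurableSet_Ioc h₁)
          (hmono ((Ioi_subset_Ioi hpq).trans hpIoi) measurableSet_Ioi h₂)
    _ = ∫ t in Ioi p, w t * F' t := by
        rw [← setIntegral_union (Ioc_disjoint_Ioi le_rfl) measurableSet_Ioi
          (hint.mono_set (Ioc_subset_Ioi_self.trans hpIoi))
          (hint.mono_set ((Ioi_subset_Ioi hpq).trans hpIoi)), Ioc_union_Ioi_eq_Ioi hpq]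
    _ ≤ ∫ t in Ioi s, w t * F' t := by
        refine setIntegral_mono_set hint ?_ (Ioi_subset_Ioi hsp).eventuallyLE
        filter_upwards [ae_restrict_mem measurableSet_Ioi] with t ht
        exact mul_nonneg (hw0 t ht) (hF' t ht)

/-- `1 - κ`, where `κ = 1/(1+tτ²)` is the shrinkage coefficient. -/
def oneSubKappa (τ t : ℝ) : ℝ := t * τ ^ 2 / (1 + t * τ ^ 2)

section oneSubKappa

variable {τ t : ℝ}

theorem oneSubKappa_le_one (ht : 0 ≤ t) : oneSubKappa τ t ≤ 1 :=
  div_le_one_of_le₀ (by linarith) (by positivity)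

theorem monotoneOn_oneSubKappa : MonotoneOn (oneSubKappa τ) (Ici 0) := by
  intro s hs t ht hst
  simp only [mem_Ici] at hs ht
  unfold oneSubKappa
  rw [div_le_div_iff₀ (by positivity) (by positivity)]
  nlinarith [mul_le_mul_of_nonneg_right hst (sq_nonneg τ)]

theorem oneSubKappa_one_div_one_sub_sq (hτ : τ ^ 2 ≠ 1) :
    oneSubKappa τ (1 / (1 - τ ^ 2)) = τ ^ 2 := by
  have : 1 - τ ^ 2 ≠ 0 := sub_ne_zero.2 hτ.symm
  unfold oneSubKappa
  field_simp
  ring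

theorem oneSubKappa_one_div_sq (hτ : τ ≠ 0) : oneSubKappa τ (1 / τ ^ 2) = 1 / 2 := by
  unfold oneSubKappa
  field_simp
  norm_num

theorem sq_le_oneSubKappa (hτ : τ ^ 2 < 1) (ht : 1 / (1 - τ ^ 2) ≤ t) :
    τ ^ 2 ≤ oneSubKappa τ t := by
  have hp : 0 ≤ 1 / (1 - τ ^ 2) := by rw [one_div_nonneg]; linarith
  rw [← oneSubKappa_one_div_one_sub_sq hτ.ne]
  exact monotoneOn_oneSubKappa hp (hp.trans ht) ht

theorem one_half_le_oneSubKappa (hτ : τ ≠ 0) (ht : 1 / τ ^ 2 ≤ t) : 1 / 2 ≤ oneSubKappa τ t := by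
  have hq : 0 ≤ 1 / τ ^ 2 := by positivity
  rw [← oneSubKappa_one_div_sq hτ]
  exact monotoneOn_oneSubKappa hq (hq.trans ht) ht

theorem hasDerivAt_oneSubKappa (ht : 1 + t * τ ^ 2 ≠ 0) :
    HasDerivAt (oneSubKappa τ) (τ ^ 2 / (1 + t * τ ^ 2) ^ 2) t := by
  have h := ((hasDerivAt_id' t).mul_const (τ ^ 2)).div
    (((hasDerivAt_id' t).mul_const (τ ^ 2)).const_add 1) ht
  exact h.congr_deriv (by ring)

theorem tendsto_oneSubKappa_atTop (hτ : τ ≠ 0) : Tendsto (oneSubKappa τ) atTop (𝓝 1) := by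
  have hden : Tendsto (fun t : ℝ => 1 + t * τ ^ 2) atTop atTop :=
    tendsto_atTop_add_const_left _ 1 (tendsto_id.atTop_mul_const (by positivity))
  have h := (tendsto_const_nhds (x := (1 : ℝ))).sub hden.inv_tendsto_atTop
  rw [sub_zero] at h
  refine h.congr' ?_
  filter_upwards [eventually_ge_atTop 0] with t ht
  simp only [Pi.inv_apply, oneSubKappa]
  field_simp
  ring

end oneSubKappa

theorem I_five_half_integrand_eq (ℓ : ℝ) {τ y t : ℝ} (hτ : 0 ≤ τ) (hy : y ≠ 0) (ht : 0 < t) :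
    (t * τ ^ 2) ^ ((5:ℝ)/2 - 1/2) * (1 + t * τ ^ 2) ^ (-((5:ℝ)/2)) * t ^ (-(3:ℝ)/2) * ℓ *
        Real.exp (t * τ ^ 2 * y / (1 + t * τ ^ 2)) =
      τ / y * (ℓ * √(oneSubKappa τ t)) *
        (Real.exp (y * oneSubKappa τ t) * (y * (τ ^ 2 / (1 + t * τ ^ 2) ^ 2))) := by
  have hd : 0 < 1 + t * τ ^ 2 := by positivity
  have hnum : (t * τ ^ 2) ^ ((5:ℝ)/2 - 1/2) = (t * τ ^ 2) ^ 2 := by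
    rw [show (5:ℝ)/2 - 1/2 = (2 : ℕ) by norm_num, Real.rpow_natCast]
  have hd_rpow : (1 + t * τ ^ 2) ^ (-((5:ℝ)/2)) = ((1 + t * τ ^ 2) ^ 2 * √(1 + t * τ ^ 2))⁻¹ := by
    rw [show -((5:ℝ)/2) = -((2 : ℕ) + 1/2) by norm_num, Real.rpow_neg hd.le,
      Real.rpow_add hd, Real.rpow_natCast, Real.sqrt_eq_rpow]
  have ht_rpow : t ^ (-(3:ℝ)/2) = (t * √t)⁻¹ := by
    rw [show -(3:ℝ)/2 = -((1 : ℕ) + 1/2) by norm_num, Real.rpow_neg ht.le,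
      Real.rpow_add ht, Real.rpow_natCast, Real.sqrt_eq_rpow, pow_one]
  have hsqrt : √(oneSubKappa τ t) = τ * √t / √(1 + t * τ ^ 2) := by
    rw [oneSubKappa, Real.sqrt_div' _ hd.le, Real.sqrt_mul ht.le, Real.sqrt_sq hτ, mul_comm τ]
  have hexp : t * τ ^ 2 * y / (1 + t * τ ^ 2) = y * oneSubKappa τ t := by
    rw [oneSubKappa]; ring
  have hst : √t ^ 2 = t := Real.sq_sqrt ht.le
  have : √t ≠ 0 := by positivity
  have : √(1 + t * τ ^ 2) ≠ 0 := by positivity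
  rw [hnum, hd_rpow, ht_rpow, hsqrt, hexp]
  field_simp
  rw [hst]
  ring

theorem I_five_half_lower_bound_general (L : ℝ → ℝ) (M : ℝ)
    (hLpos : ∀ t : ℝ, 0 < t → 0 < L t)
    (hLmeas : Measurable L)
    (hLmono : ∀ s t : ℝ, 0 < s → s ≤ t → L s ≤ L t)
    (hLle : ∀ t : ℝ, 0 < t → L t ≤ M)
    (y τ : ℝ) (hy : 0 < y) (hτ : 0 < τ) (hτ' : τ < 1 / Real.sqrt 2) :
    L 1 * τ * (τ / y * (Real.exp (y / 2) - Real.exp (τ ^ 2 * y)) +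
        1 / (Real.sqrt 2 * y) * (Real.exp y - Real.exp (y / 2))) ≤
      ∫ t in Ioi (0:ℝ), (t * τ ^ 2) ^ ((5:ℝ)/2 - 1/2) * (1 + t * τ ^ 2) ^ (-((5:ℝ)/2)) *
        t ^ (-(3:ℝ)/2) * L t * Real.exp (t * τ ^ 2 * y / (1 + t * τ ^ 2)) := by
  have hτ2 : τ ^ 2 < 1 / 2 := by
    have h := pow_lt_pow_left₀ hτ' hτ.le two_ne_zero
    rwa [div_pow, one_pow, Real.sq_sqrt zero_le_two] at h
  have h1p : 1 ≤ 1 / (1 - τ ^ 2) := one_le_one_div (by linarith) (by linarith [sq_nonneg τ])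
  have hpq : 1 / (1 - τ ^ 2) ≤ 1 / τ ^ 2 := one_div_le_one_div_of_le (by positivity) (by linarith)
  have hweight {c t : ℝ} (hc : 0 ≤ c) (ht : 1 ≤ t) (hct : c ^ 2 ≤ oneSubKappa τ t) :
      τ / y * (L 1 * c) ≤ τ / y * (L t * √(oneSubKappa τ t)) := by
    have hL := hLmono 1 t one_pos ht
    exact mul_le_mul_of_nonneg_left
      (mul_le_mul hL (Real.le_sqrt_of_sq_le hct) hc ((hLpos 1 one_pos).le.trans hL)) (by positivity)
  have hlower := le_setIntegral_mul_deriv (s := 0) (p := 1 / (1 - τ ^ 2)) (q := 1 / τ ^ 2)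
    (F := fun t => Real.exp (y * oneSubKappa τ t)) (l := Real.exp y)
    (w := fun t => τ / y * (L t * √(oneSubKappa τ t)))
    (c₁ := τ / y * (L 1 * τ)) (c₂ := τ / y * (L 1 * √(1 / 2))) (W := τ / y * (M * 1))
    (fun t (ht : 0 ≤ t) => ((hasDerivAt_oneSubKappa (by positivity)).const_mul y).exp)
    (fun t (ht : 0 < t) => by positivity)
    (by simpa only [mul_one, Function.comp_def] using
      (Real.continuous_exp.tendsto _).comp ((tendsto_oneSubKappa_atTop hτ.ne').const_mul y))
    (by unfold oneSubKappa; fun_prop)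
    (fun t (ht : 0 < t) => by have := hLpos t ht; positivity)
    (fun t (ht : 0 < t) => mul_le_mul_of_nonneg_left (mul_le_mul (hLle t ht)
      (Real.sqrt_le_one.2 (oneSubKappa_le_one ht.le)) (Real.sqrt_nonneg _)
      ((hLpos t ht).le.trans (hLle t ht))) (by positivity))
    (zero_le_one.trans h1p) hpq
    (fun t ht => hweight hτ.le (h1p.trans ht.1.le) (sq_le_oneSubKappa (by linarith) ht.1.le))
    (fun t ht => hweight (Real.sqrt_nonneg _) ((h1p.trans hpq).trans ht.le)
      ((Real.sq_sqrt (by norm_num)).trans_le (one_half_le_oneSubKappa hτ.ne' ht.le)))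
  rw [setIntegral_congr_fun measurableSet_Ioi
    fun t ht => I_five_half_integrand_eq (L t) hτ.le hy.ne' ht]
  simp only [oneSubKappa_one_div_one_sub_sq (by linarith : τ ^ 2 ≠ 1),
    oneSubKappa_one_div_sq hτ.ne'] at hlower
  convert hlower using 1
  rw [show √(1 / 2 : ℝ) = (√2)⁻¹ by rw [← Real.sqrt_inv, one_div], mul_one_div, mul_comm y]
  field_simp

/-- part of Lemma A.6: bound on the integral
`I_{5/2} = ∫₀^∞ (tτ²)^{5/2 - 1/2} (1+tτ²)^{-(5/2)} t^{-3/2} L(t) e^{tτ²y/(1+tτ²)} dt`. -/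
theorem I_five_half_lower_bound (L : ℝ → ℝ) (M K : ℝ) (hM : 0 < M) (hK : 0 < K)
    (hLpos : ∀ t : ℝ, 0 < t → 0 < L t)
    (hLmeas : Measurable L)
    (hLmono : ∀ s t : ℝ, 0 < s → s ≤ t → L s ≤ L t)
    (hLslow : ∀ c : ℝ, 0 < c → Tendsto (fun t => L (c * t) / L t) atTop (nhds 1))
    (hLle : ∀ t : ℝ, 0 < t → L t ≤ M)
    (hLint : (∫ t in Ioi (0:ℝ), t ^ (-(3:ℝ)/2) * L t) = 1 / K)
    (y τ : ℝ) (hy : 0 < y) (hτ : 0 < τ) (hτ' : τ < 1 / Real.sqrt 2) :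
    L 1 * τ * (τ / y * (Real.exp (y / 2) - Real.exp (τ ^ 2 * y)) +
        1 / (Real.sqrt 2 * y) * (Real.exp y - Real.exp (y / 2))) ≤
      ∫ t in Ioi (0:ℝ), (t * τ ^ 2) ^ ((5:ℝ)/2 - 1/2) * (1 + t * τ ^ 2) ^ (-((5:ℝ)/2)) *
        t ^ (-(3:ℝ)/2) * L t * Real.exp (t * τ ^ 2 * y / (1 + t * τ ^ 2)) :=
  I_five_half_lower_bound_general L M hLpos hLmeas hLmono hLle y τ hy hτ hτ'
end
end
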